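/- arXiv:1906.07478 — 3 statements merged into one kernel-verified Lean document; each statement's English description precedes it below -/
import Mathlib

section
/- Let u : ℝ³ → ℝ³ be differentiable at a point x with u(x) ≠ 0. Then the scalar function |u| and the vector field v := u/|u| are differentiable at x, and |∇u(x)|² = |u(x)|² |∇v(x)|² + |∇|u|(x)|², where |∇w|² denotes the squared Frobenius norm Σ_{i,j} (∂_j w_i)² of the Jacobian of a vector field w and ∇|u| is the gradient of the scalar function |u|. -/
open MeasureTheory
open scoped RealInnerProductSpace

noncomputable section

abbrev E3 : Type := EuclideanSpace ℝ (Fin 3)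

/-- `i`-th standard basis vector of `ℝ³`. -/
def e3 (i : Fin 3) : E3 := EuclideanSpace.single i (1 : ℝ)

/-- Gradient of a scalar function on `ℝ³`. -/
def grad3 (f : E3 → ℝ) (x : E3) : E3 := WithLp.toLp 2 (fun i => fderiv ℝ f x (e3 i))

/-- Divergence of a vector field on `ℝ³`. -/
def div3 (u : E3 → E3) (x : E3) : ℝ := ∑ i, fderiv ℝ u x (e3 i) i

/-- Jacobian entry `∂_j u_i`. -/
def jac3 (u : E3 → E3) (x : E3) (i j : Fin 3) : ℝ := fderiv ℝ u x (e3 j) i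

/-- Squared Frobenius norm of the Jacobian, `|∇u|²`. -/
def gradSq3 (u : E3 → E3) (x : E3) : ℝ := ∑ i, ∑ j, (jac3 u x i j) ^ 2

/-- Squared Euclidean norm of the gradient of a scalar function, `|∇f|²`. -/
def gradNormSq3 (f : E3 → ℝ) (x : E3) : ℝ := ∑ i, (fderiv ℝ f x (e3 i)) ^ 2

/-- Laplacian of a scalar function on `ℝ³`. -/
def lap3 (f : E3 → ℝ) (x : E3) : ℝ :=
  ∑ i, fderiv ℝ (fun y => fderiv ℝ f y (e3 i)) x (e3 i)

/-- Componentwise Laplacian of a vector field on `ℝ³`. -/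
def lapVec3 (u : E3 → E3) (x : E3) : E3 := WithLp.toLp 2 (fun i => lap3 (fun y => u y i) x)

/-- The full compressible Navier–Stokes system, pointwise at `(t, x)`. -/
def NSEq (μ lam κ R cv : ℝ) (ρ : ℝ → E3 → ℝ) (u : ℝ → E3 → E3) (θ : ℝ → E3 → ℝ)
    (t : ℝ) (x : E3) : Prop :=
  (deriv (fun τ => ρ τ x) t + div3 (fun y => ρ t y • u t y) x = 0) ∧
  (ρ t x • deriv (fun τ => u τ x) t + ρ t x • fderiv ℝ (u t) x (u t x)
      + grad3 (fun y => R * ρ t y * θ t y) x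
    = μ • lapVec3 (u t) x + (μ + lam) • grad3 (div3 (u t)) x) ∧
  (cv * (ρ t x * deriv (fun τ => θ τ x) t + ρ t x * fderiv ℝ (θ t) x (u t x))
      + R * ρ t x * θ t x * div3 (u t) x - κ * lap3 (θ t) x
    = μ / 2 * (∑ i, ∑ j, (jac3 (u t) x i j + jac3 (u t) x j i) ^ 2)
      + lam * (div3 (u t) x) ^ 2)

/-- Material derivative `u̇ = ∂ₜ u + (u·∇)u`. -/
def udot (u : ℝ → E3 → E3) (t : ℝ) (x : E3) : E3 :=
  deriv (fun τ => u τ x) t + fderiv ℝ (u t) x (u t x)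

/-- `L^r` norm (finite exponent) of a scalar function on `ℝ³`. -/
def Lq3 (f : E3 → ℝ) (r : ℝ) : ℝ := (∫ x : E3, |f x| ^ r) ^ (1 / r)

/-- `L^∞` norm of a scalar function on `ℝ³`. -/
def Linf3 (f : E3 → ℝ) : ℝ := (eLpNorm f ⊤ volume).toReal

/-- A classical solution of the full compressible Navier–Stokes system on `[0,T]`:
smooth, `ρ, θ ≥ 0` on the time slab, `u(t,·)` and `θ(t,·)` supported in a fixed
compact set, and the equations hold pointwise for `t ∈ [0,T]`. -/
structure IsClassicalSol (μ lam κ R cv T : ℝ)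
    (ρ : ℝ → E3 → ℝ) (u : ℝ → E3 → E3) (θ : ℝ → E3 → ℝ) : Prop where
  smooth_rho : ContDiff ℝ (⊤ : ℕ∞) fun p : ℝ × E3 => ρ p.1 p.2
  smooth_u : ContDiff ℝ (⊤ : ℕ∞) fun p : ℝ × E3 => u p.1 p.2
  smooth_theta : ContDiff ℝ (⊤ : ℕ∞) fun p : ℝ × E3 => θ p.1 p.2
  rho_nonneg : ∀ t ∈ Set.Icc 0 T, ∀ x, 0 ≤ ρ t x
  theta_nonneg : ∀ t ∈ Set.Icc 0 T, ∀ x, 0 ≤ θ t x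
  compact_support : ∃ K : Set E3, IsCompact K ∧
      ∀ t ∈ Set.Icc 0 T, ∀ x ∉ K, u t x = 0 ∧ θ t x = 0
  eqs : ∀ t ∈ Set.Icc 0 T, ∀ x, NSEq μ lam κ R cv ρ u θ t x

lemma aux1 (N w0 w1 w2 b0 b1 b2 : ℝ) (hN : N ≠ 0) (hw : w0^2+w1^2+w2^2 = N^2) :
    N ^ 2 * ((N⁻¹ * b0 + -(N ^ 2)⁻¹ * (1 / (2 * N) * (2 * (w0 * b0 + w1 * b1 + w2 * b2))) * w0) ^ 2
      + (N⁻¹ * b1 + -(N ^ 2)⁻¹ * (1 / (2 * N) * (2 * (w0 * b0 + w1 * b1 + w2 * b2))) * w1) ^ 2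
      + (N⁻¹ * b2 + -(N ^ 2)⁻¹ * (1 / (2 * N) * (2 * (w0 * b0 + w1 * b1 + w2 * b2))) * w2) ^ 2)
    = b0 ^ 2 + b1 ^ 2 + b2 ^ 2 - ((w0 * b0 + w1 * b1 + w2 * b2) / N) ^ 2 := by
  have key : N ^ 2 * ((N⁻¹ * b0 + -(N ^ 2)⁻¹ * (1 / (2 * N) * (2 * (w0 * b0 + w1 * b1 + w2 * b2))) * w0) ^ 2
      + (N⁻¹ * b1 + -(N ^ 2)⁻¹ * (1 / (2 * N) * (2 * (w0 * b0 + w1 * b1 + w2 * b2))) * w1) ^ 2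
      + (N⁻¹ * b2 + -(N ^ 2)⁻¹ * (1 / (2 * N) * (2 * (w0 * b0 + w1 * b1 + w2 * b2))) * w2) ^ 2)
      = b0 ^ 2 + b1 ^ 2 + b2 ^ 2 - 2 * ((w0 * b0 + w1 * b1 + w2 * b2) / N) ^ 2
        + (w0 * b0 + w1 * b1 + w2 * b2) ^ 2 * (w0 ^ 2 + w1 ^ 2 + w2 ^ 2) / N ^ 4 := by
    field_simp
    ring
  rw [key, hw]
  field_simp
  ring


set_option maxHeartbeats 1000000 in
/-- if `u : ℝ³ → ℝ³` is differentiable at `x` and `u x ≠ 0`, then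
`|u|` and `v = u/|u|` are differentiable at `x` and
`|∇u|² = |u|² |∇v|² + |∇|u||²` at `x`. -/
theorem frobenius_decomposition_of_jacobian (u : E3 → E3) (x : E3)
    (hu : DifferentiableAt ℝ u x) (hx : u x ≠ 0) :
    DifferentiableAt ℝ (fun y => ‖u y‖) x ∧
    DifferentiableAt ℝ (fun y => ‖u y‖⁻¹ • u y) x ∧
    gradSq3 u x
      = ‖u x‖ ^ 2 * gradSq3 (fun y => ‖u y‖⁻¹ • u y) x
        + gradNormSq3 (fun y => ‖u y‖) x := by
  
  have hN : ‖u x‖ ≠ 0 := norm_ne_zero_iff.mpr hx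
  have hD := hu.hasFDerivAt
  have hsq : HasFDerivAt (fun y => ‖u y‖ ^ 2) (2 • (innerSL ℝ (u x)).comp (fderiv ℝ u x)) x :=
    hD.norm_sq
  have hsqne : ‖u x‖ ^ 2 ≠ 0 := pow_ne_zero _ hN
  have hnorm : HasFDerivAt (fun y => ‖u y‖)
      ((1 / (2 * ‖u x‖)) • (2 • (innerSL ℝ (u x)).comp (fderiv ℝ u x))) x := by
    have h := hsq.sqrt hsqne
    rw [Real.sqrt_sq (norm_nonneg _)] at h
    simp only [Real.sqrt_sq (norm_nonneg _)] at h
    exact h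
  have hinv : HasFDerivAt (fun y => ‖u y‖⁻¹)
      ((-(‖u x‖ ^ 2)⁻¹) • ((1 / (2 * ‖u x‖)) • (2 • (innerSL ℝ (u x)).comp (fderiv ℝ u x)))) x :=
    (hasDerivAt_inv hN).comp_hasFDerivAt x hnorm
  have hv := hinv.smul hD
  refine ⟨hnorm.differentiableAt, hv.differentiableAt, ?_⟩
  have hfn := hnorm.fderiv
  have hfv := (show HasFDerivAt (fun y => ‖u y‖⁻¹ • u y) _ x from hv).fderiv
  have hu2 : (u x 0) ^ 2 + (u x 1) ^ 2 + (u x 2) ^ 2 = ‖u x‖ ^ 2 := by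
    rw [EuclideanSpace.norm_sq_eq, Fin.sum_univ_three]
    simp [Real.norm_eq_abs, sq_abs]
  have k0 := aux1 ‖u x‖ (u x 0) (u x 1) (u x 2)
    (fderiv ℝ u x (e3 0) 0) (fderiv ℝ u x (e3 0) 1) (fderiv ℝ u x (e3 0) 2) hN hu2
  have k1 := aux1 ‖u x‖ (u x 0) (u x 1) (u x 2)
    (fderiv ℝ u x (e3 1) 0) (fderiv ℝ u x (e3 1) 1) (fderiv ℝ u x (e3 1) 2) hN hu2
  have k2 := aux1 ‖u x‖ (u x 0) (u x 1) (u x 2)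
    (fderiv ℝ u x (e3 2) 0) (fderiv ℝ u x (e3 2) 1) (fderiv ℝ u x (e3 2) 2) hN hu2
  simp only [gradSq3, gradNormSq3, jac3, hfn, hfv]
  simp only [ContinuousLinearMap.add_apply, ContinuousLinearMap.smul_apply,
    ContinuousLinearMap.smulRight_apply, ContinuousLinearMap.comp_apply, innerSL_apply_apply,
    PiLp.add_apply, PiLp.smul_apply, smul_eq_mul, PiLp.inner_apply, RCLike.inner_apply,
    conj_trivial, Fin.sum_univ_three, nsmul_eq_mul, Nat.cast_ofNat]
  linear_combination -k0 - k1 - k2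
end
end

section
/- Let μ > 0 and λ ∈ ℝ with μ + λ ≥ 0, and let ε₀ ∈ (0,1). Let u : ℝ³ → ℝ³ be differentiable at a point x with u(x) ≠ 0, and set v := u/|u|. Define, with all quantities evaluated at x, G := μ(1−ε₀)|u|²|∇u|² + (λ+μ)|u|²(div u)² + 2μ|u|²|∇|u||² + 2(μ+λ)|u|²(div v)(u·∇|u|) + 2(μ+λ)(u·∇|u|)². Then G ≥ −(λ+ε₀μ)|u|⁴|∇v|² + μ(3−ε₀)|u|²|∇|u||². -/
open MeasureTheory
open scoped RealInnerProductSpace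

noncomputable section

lemma trace_sq_aux (p q r s t w z k l : ℝ) :
    (p + q + r) ^ 2 ≤ 3 * (p^2 + s^2 + t^2 + (w^2 + q^2 + z^2) + (k^2 + l^2 + r^2)) := by
  nlinarith [sq_nonneg (p-q), sq_nonneg (p-r), sq_nonneg (q-r), sq_nonneg s, sq_nonneg t,
    sq_nonneg w, sq_nonneg z, sq_nonneg k, sq_nonneg l]

/-- pointwise lower bound for the quadratic form `G` appearing in the
Kato-type estimate, with `v = u/|u|`:
`G ≥ −(λ+ε₀μ)|u|⁴|∇v|² + μ(3−ε₀)|u|²|∇|u||²`. -/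
theorem G_pointwise_lower_bound (μ lam ε₀ : ℝ) (hμ : 0 < μ) (hml : 0 ≤ μ + lam)
    (hε : ε₀ ∈ Set.Ioo (0 : ℝ) 1) (u : E3 → E3) (x : E3)
    (hu : DifferentiableAt ℝ u x) (hx : u x ≠ 0) :
    μ * (1 - ε₀) * ‖u x‖ ^ 2 * gradSq3 u x
      + (lam + μ) * ‖u x‖ ^ 2 * (div3 u x) ^ 2
      + 2 * μ * ‖u x‖ ^ 2 * gradNormSq3 (fun y => ‖u y‖) x
      + 2 * (μ + lam) * ‖u x‖ ^ 2 * div3 (fun y => ‖u y‖⁻¹ • u y) x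
          * ⟪u x, grad3 (fun y => ‖u y‖) x⟫
      + 2 * (μ + lam) * ⟪u x, grad3 (fun y => ‖u y‖) x⟫ ^ 2
    ≥ -(lam + ε₀ * μ) * ‖u x‖ ^ 4 * gradSq3 (fun y => ‖u y‖⁻¹ • u y) x
      + μ * (3 - ε₀) * ‖u x‖ ^ 2 * gradNormSq3 (fun y => ‖u y‖) x := by
  have hRpos : (0:ℝ) < ‖u x‖ := norm_pos_iff.mpr hx
  have hRne : ‖u x‖ ≠ 0 := hRpos.ne'
  set v : E3 → E3 := fun y => ‖u y‖⁻¹ • u y with hv_def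
  have hr : DifferentiableAt ℝ (fun y => ‖u y‖) x := hu.norm ℝ hx
  have hvdiff : DifferentiableAt ℝ v x := (hr.inv hRne).smul hu
  have hev : ∀ᶠ y in nhds x, u y ≠ 0 := hu.continuousAt.eventually_ne hx
  have hfd : fderiv ℝ u x = ‖u x‖ • fderiv ℝ v x
      + (fderiv ℝ (fun y => ‖u y‖) x).smulRight (v x) := by
    have h1 : (fun y => u y) =ᶠ[nhds x] (fun y => ‖u y‖ • v y) := by
      filter_upwards [hev] with y hy
      simp [hv_def, smul_smul, mul_inv_cancel₀ (norm_ne_zero_iff.mpr hy)]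
    rw [show u = fun y => u y from rfl, h1.fderiv_eq, fderiv_fun_smul hr hvdiff]
  have hjac : ∀ i j, fderiv ℝ u x (e3 j) i
      = ‖u x‖ * fderiv ℝ v x (e3 j) i
        + fderiv ℝ (fun y => ‖u y‖) x (e3 j) * v x i := by
    intro i j
    rw [hfd]
    simp [PiLp.add_apply, PiLp.smul_apply, smul_eq_mul]
  have horth : ∀ w : E3, ⟪v x, fderiv ℝ v x w⟫ = 0 := by
    have h1 : HasFDerivAt (fun y => ‖v y‖ ^ 2)
        (2 • (innerSL ℝ (v x)).comp (fderiv ℝ v x)) x := hvdiff.hasFDerivAt.norm_sq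
    have h2 : (fun y => ‖v y‖ ^ 2) =ᶠ[nhds x] (fun _ => (1:ℝ)) := by
      filter_upwards [hev] with y hy
      have : ‖v y‖ = 1 := by
        simp [hv_def, norm_smul, inv_mul_cancel₀ (norm_ne_zero_iff.mpr hy)]
      simp [this]
    have h3 : HasFDerivAt (fun y => ‖v y‖^2) (0 : E3 →L[ℝ] ℝ) x :=
      (hasFDerivAt_const (1:ℝ) x).congr_of_eventuallyEq h2
    have h4 := h1.unique h3
    intro w
    have h5 := congrArg (fun L : E3 →L[ℝ] ℝ => L w) h4
    simp only [ContinuousLinearMap.add_apply, ContinuousLinearMap.smul_apply,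
      ContinuousLinearMap.comp_apply,
      innerSL_apply_apply, ContinuousLinearMap.zero_apply, smul_eq_mul, two_smul] at h5
    linarith
  have hvnorm : ‖v x‖ = 1 := by
    simp [hv_def, norm_smul, inv_mul_cancel₀ hRne]
  have hc : v x 0 ^ 2 + v x 1 ^ 2 + v x 2 ^ 2 = 1 := by
    have h := real_inner_self_eq_norm_sq (v x)
    rw [hvnorm] at h
    simp only [PiLp.inner_apply, RCLike.inner_apply, conj_trivial, Fin.sum_univ_three] at h
    linear_combination h
  have ho : ∀ j, v x 0 * fderiv ℝ v x (e3 j) 0 + v x 1 * fderiv ℝ v x (e3 j) 1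
      + v x 2 * fderiv ℝ v x (e3 j) 2 = 0 := by
    intro j
    have h := horth (e3 j)
    simp only [PiLp.inner_apply, RCLike.inner_apply, conj_trivial, Fin.sum_univ_three] at h
    linear_combination h
  have hux : ∀ i, u x i = ‖u x‖ * v x i := by
    intro i
    rw [hv_def]
    simp only [PiLp.smul_apply, smul_eq_mul]
    field_simp
  have hgs : gradSq3 u x = ‖u x‖^2 * gradSq3 v x + gradNormSq3 (fun y => ‖u y‖) x := by
    simp only [gradSq3, jac3, gradNormSq3, Fin.sum_univ_three, hjac]
    linear_combination
      ((fderiv ℝ (fun y => ‖u y‖) x (e3 0))^2 + (fderiv ℝ (fun y => ‖u y‖) x (e3 1))^2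
        + (fderiv ℝ (fun y => ‖u y‖) x (e3 2))^2) * hc
      + 2*‖u x‖*(fderiv ℝ (fun y => ‖u y‖) x (e3 0)) * (ho 0)
      + 2*‖u x‖*(fderiv ℝ (fun y => ‖u y‖) x (e3 1)) * (ho 1)
      + 2*‖u x‖*(fderiv ℝ (fun y => ‖u y‖) x (e3 2)) * (ho 2)
  have hdiv : div3 u x = ‖u x‖ * div3 v x
      + (v x 0 * fderiv ℝ (fun y => ‖u y‖) x (e3 0)
        + v x 1 * fderiv ℝ (fun y => ‖u y‖) x (e3 1)
        + v x 2 * fderiv ℝ (fun y => ‖u y‖) x (e3 2)) := by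
    simp only [div3, Fin.sum_univ_three, hjac]
    ring
  have hP : ⟪u x, grad3 (fun y => ‖u y‖) x⟫
      = ‖u x‖ * (v x 0 * fderiv ℝ (fun y => ‖u y‖) x (e3 0)
        + v x 1 * fderiv ℝ (fun y => ‖u y‖) x (e3 1)
        + v x 2 * fderiv ℝ (fun y => ‖u y‖) x (e3 2)) := by
    simp only [PiLp.inner_apply, RCLike.inner_apply, conj_trivial, Fin.sum_univ_three,
      grad3, PiLp.toLp_apply, hux]
    ring
  have hAD : (div3 v x)^2 ≤ 3 * gradSq3 v x := by
    have h := trace_sq_aux (fderiv ℝ v x (e3 0) 0) (fderiv ℝ v x (e3 1) 1)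
      (fderiv ℝ v x (e3 2) 2) (fderiv ℝ v x (e3 1) 0) (fderiv ℝ v x (e3 2) 0)
      (fderiv ℝ v x (e3 0) 1) (fderiv ℝ v x (e3 2) 1) (fderiv ℝ v x (e3 0) 2)
      (fderiv ℝ v x (e3 1) 2)
    simp only [div3, gradSq3, jac3, Fin.sum_univ_three]
    linarith
  rw [hgs, hdiv, hP]
  set R := ‖u x‖
  set A := gradSq3 v x
  set B := gradNormSq3 (fun y => ‖u y‖) x
  set Dv := div3 v x
  set Q := v x 0 * fderiv ℝ (fun y => ‖u y‖) x (e3 0)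
    + v x 1 * fderiv ℝ (fun y => ‖u y‖) x (e3 1)
    + v x 2 * fderiv ℝ (fun y => ‖u y‖) x (e3 2) with hQ
  have e1 : 0 ≤ 3*A - Dv^2 := by linarith
  have h1 : 0 ≤ (μ+lam) * ((R^2*R^2) * (3*A - Dv^2)) :=
    mul_nonneg hml (mul_nonneg (mul_nonneg (sq_nonneg R) (sq_nonneg R)) e1)
  have h2 : 0 ≤ (μ+lam) * (R^2 * (2*R*Dv + 3*Q)^2) :=
    mul_nonneg hml (mul_nonneg (sq_nonneg R) (sq_nonneg _))
  nlinarith [h1, h2]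
end
end

section
/- Let 3/2 < q < ∞ and M > 0. For every η > 0 there exists a constant C > 0, depending only on q, M and η, such that for every measurable ρ : ℝ³ → ℝ with 0 ≤ ρ ≤ M, every nonnegative compactly supported C¹ function θ : ℝ³ → ℝ, and every compactly supported C¹ vector field u : ℝ³ → ℝ³: ∫ ρ|u|²θ² dx ≤ C ‖θ‖_{L^q}^{2q/(2q−3)} ( ‖√ρ θ‖_{L²}² + ‖√ρ |u|²‖_{L²}² ) + η ( ‖∇θ‖_{L²}² + ‖∇(|u|²)‖_{L²}² ). -/
open MeasureTheory
open scoped RealInnerProductSpace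

noncomputable section

open scoped ENNReal NNReal

section Helpers

lemma opnorm_sq_eq (L : E3 →L[ℝ] ℝ) : ‖L‖ ^ 2 = ∑ i, (L (e3 i)) ^ 2 := by
  set v := (InnerProductSpace.toDual ℝ E3).symm L with hv
  have hnorm : ‖L‖ = ‖v‖ := ((InnerProductSpace.toDual ℝ E3).symm.norm_map L).symm
  have h1 : ∀ i, L (e3 i) = v i := by
    intro i
    rw [show L (e3 i) = inner ℝ v (e3 i) from (InnerProductSpace.toDual_symm_apply).symm]
    simp [e3, EuclideanSpace.inner_single_right, real_inner_comm]
  simp_rw [h1, hnorm]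
  rw [EuclideanSpace.norm_eq]
  rw [Real.sq_sqrt (by positivity)]
  simp [sq_abs]

lemma grad_pt (f : E3 → ℝ) (x : E3) :
    (‖fderiv ℝ f x‖₊ : ℝ≥0∞) ^ (2:ℝ) = ENNReal.ofReal (gradNormSq3 f x) := by
  rw [show gradNormSq3 f x = ‖fderiv ℝ f x‖ ^ 2 from (opnorm_sq_eq _).symm]
  rw [ENNReal.ofReal_pow (norm_nonneg _), ofReal_norm, enorm_eq_nnnorm]
  rw [show ((2:ℝ)) = ((2:ℕ):ℝ) by norm_num, ENNReal.rpow_natCast]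

def cS : ℝ≥0 := SNormLESNormFDerivOfEqConst (F := ℝ) (volume : Measure E3) (((2:ℝ≥0)):ℝ)

lemma sobolev6 (f : E3 → ℝ) (hf : ContDiff ℝ 1 f) (hsupp : HasCompactSupport f) :
    ∫⁻ x, (‖f x‖₊ : ℝ≥0∞) ^ (6:ℝ)
      ≤ (cS : ℝ≥0∞) ^ (6:ℝ)
        * (∫⁻ x, ENNReal.ofReal (gradNormSq3 f x)) ^ (3:ℝ) := by
  have hn : 0 < Module.finrank ℝ E3 := by simp [finrank_euclideanSpace_fin]
  have hp' : ((6:ℝ≥0) : ℝ)⁻¹ = ((2:ℝ≥0):ℝ)⁻¹ - ((Module.finrank ℝ E3 : ℝ))⁻¹ := by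
    rw [finrank_euclideanSpace_fin]; norm_num
  have hS := eLpNorm_le_eLpNorm_fderiv_of_eq (F := ℝ) (volume : Measure E3)
    hf hsupp (p := 2) (p' := 6) (by norm_num) hn hp'
  have h6 : eLpNorm f ((6:ℝ≥0) : ℝ≥0∞) volume
      = (∫⁻ x, (‖f x‖₊ : ℝ≥0∞) ^ (6:ℝ)) ^ (1/6 : ℝ) := by
    rw [eLpNorm_eq_lintegral_rpow_enorm_toReal (by norm_num) (by norm_num)]
    norm_num
    rfl
  have h2 : eLpNorm (fderiv ℝ f) ((2:ℝ≥0) : ℝ≥0∞) volume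
      = (∫⁻ x, ENNReal.ofReal (gradNormSq3 f x)) ^ (1/2 : ℝ) := by
    rw [eLpNorm_eq_lintegral_rpow_enorm_toReal (by norm_num) (by norm_num)]
    norm_num
    congr 1
    exact lintegral_congr fun x => by
      rw [← grad_pt f x, ← ENNReal.rpow_natCast]; norm_num; rfl
  rw [h6, h2] at hS
  calc ∫⁻ x, (‖f x‖₊ : ℝ≥0∞) ^ (6:ℝ)
      = ((∫⁻ x, (‖f x‖₊ : ℝ≥0∞) ^ (6:ℝ)) ^ (1/6:ℝ)) ^ (6:ℝ) := by
        rw [← ENNReal.rpow_mul]; norm_num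
    _ ≤ ((cS:ℝ≥0∞) * (∫⁻ x, ENNReal.ofReal (gradNormSq3 f x)) ^ (1/2:ℝ)) ^ (6:ℝ) :=
        ENNReal.rpow_le_rpow hS (by norm_num)
    _ = (cS : ℝ≥0∞) ^ (6:ℝ) * (∫⁻ x, ENNReal.ofReal (gradNormSq3 f x)) ^ (3:ℝ) := by
        rw [ENNReal.mul_rpow_of_nonneg _ _ (by norm_num), ← ENNReal.rpow_mul]
        norm_num

lemma lint_fin {f : E3 → ℝ≥0∞} {K : Set E3} (hK : IsCompact K) {c : ℝ≥0∞} (hc : c ≠ ⊤)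
    (hb : ∀ x, f x ≤ c) (hs : ∀ x ∉ K, f x = 0) : ∫⁻ x, f x ≠ ⊤ := by
  have h1 : ∀ x, f x ≤ K.indicator (fun _ => c) x := by
    intro x
    by_cases hx : x ∈ K
    · simpa [Set.indicator_of_mem hx] using hb x
    · simp [Set.indicator_of_notMem hx, hs x hx]
  have h2 : ∫⁻ x, f x ≤ c * volume K := by
    refine le_trans (lintegral_mono h1) ?_
    rw [lintegral_indicator_const hK.measurableSet]
  exact ne_top_of_le_ne_top (ENNReal.mul_ne_top hc hK.measure_lt_top.ne) h2

lemma mul_le_add_sq (a b : ℝ≥0∞) : a * b ≤ a * a + b * b := by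
  rcases le_total a b with h | h
  · exact le_add_left (mul_le_mul_left h b)
  · exact le_add_right (mul_le_mul_right h a)

lemma cube_mul_le (a b : ℝ≥0∞) : (a * b) ^ (3:ℝ) ≤ a ^ (6:ℝ) + b ^ (6:ℝ) := by
  rw [ENNReal.mul_rpow_of_nonneg _ _ (by norm_num : (0:ℝ) ≤ 3)]
  calc a ^ (3:ℝ) * b ^ (3:ℝ) ≤ a ^ (3:ℝ) * a ^ (3:ℝ) + b ^ (3:ℝ) * b ^ (3:ℝ) :=
        mul_le_add_sq _ _
    _ = a ^ (6:ℝ) + b ^ (6:ℝ) := by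
        rw [← ENNReal.rpow_add_of_nonneg _ _ (by norm_num) (by norm_num),
          ← ENNReal.rpow_add_of_nonneg _ _ (by norm_num) (by norm_num)]
        norm_num

lemma pt_split {σ : ℝ} (hσ0 : 0 < σ) (hσ1 : σ < 1) {a b c : ℝ}
    (ha : 0 ≤ a) (hb : 0 ≤ b) (hc : 0 ≤ c) :
    a * c * b ^ 2 = a ^ σ * (a * b * c) ^ (1 - σ) * (b * (b * c) ^ σ) := by
  have h1σ : (0:ℝ) ≤ 1 - σ := by linarith
  rw [Real.mul_rpow (mul_nonneg ha hb) hc, Real.mul_rpow ha hb,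
    Real.mul_rpow hb hc]
  have hbb : b * (b ^ σ * c ^ σ) = b ^ (1:ℝ) * b ^ σ * c ^ σ := by
    rw [Real.rpow_one]; ring
  rw [hbb]
  have haa : a ^ σ * (a ^ (1-σ) * b ^ (1-σ) * c ^ (1-σ)) * (b ^ (1:ℝ) * b ^ σ * c ^ σ)
      = (a ^ σ * a ^ (1-σ)) * (b ^ (1-σ) * b ^ (1:ℝ) * b ^ σ) * (c ^ (1-σ) * c ^ σ) := by
    ring
  rw [haa, ← Real.rpow_add_of_nonneg ha hσ0.le h1σ,
    ← Real.rpow_add_of_nonneg hb h1σ (by norm_num),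
    ← Real.rpow_add_of_nonneg hb (by linarith) hσ0.le,
    ← Real.rpow_add_of_nonneg hc h1σ hσ0.le]
  norm_num
  rw [show (1 - σ + 1 + σ : ℝ) = 2 by ring, Real.rpow_two]
  ring

lemma pt_main (σ M : ℝ) (hσ0 : 0 < σ) (hσ1 : σ < 1) (a b c : ℝ)
    (ha : 0 ≤ a) (haM : a ≤ M) (hb : 0 ≤ b) (hc : 0 ≤ c) :
    ENNReal.ofReal a * ENNReal.ofReal c * (ENNReal.ofReal b * ENNReal.ofReal b)
      ≤ ENNReal.ofReal (M ^ σ) *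
        ((ENNReal.ofReal (a * b * c)) ^ (1-σ) *
         (ENNReal.ofReal b * (ENNReal.ofReal b * ENNReal.ofReal c) ^ σ)) := by
  have h1σ : (0:ℝ) ≤ 1 - σ := by linarith
  have habc : (0:ℝ) ≤ a * b * c := mul_nonneg (mul_nonneg ha hb) hc
  have h1 : (ENNReal.ofReal (a*b*c)) ^ ((1:ℝ)-σ) = ENNReal.ofReal ((a*b*c)^((1:ℝ)-σ)) :=
    ENNReal.ofReal_rpow_of_nonneg habc h1σ
  have h2 : (ENNReal.ofReal b * ENNReal.ofReal c) ^ σ = ENNReal.ofReal ((b*c)^σ) := by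
    rw [← ENNReal.ofReal_mul hb]
    exact ENNReal.ofReal_rpow_of_nonneg (mul_nonneg hb hc) hσ0.le
  have hlhs : ENNReal.ofReal a * ENNReal.ofReal c * (ENNReal.ofReal b * ENNReal.ofReal b)
      = ENNReal.ofReal (a * c * (b * b)) := by
    rw [ENNReal.ofReal_mul (mul_nonneg ha hc), ENNReal.ofReal_mul ha, ENNReal.ofReal_mul hb]
  rw [hlhs, h1, h2, ← ENNReal.ofReal_mul hb,
    ← ENNReal.ofReal_mul (Real.rpow_nonneg habc _),
    ← ENNReal.ofReal_mul (Real.rpow_nonneg (le_trans ha haM) _)]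
  refine ENNReal.ofReal_le_ofReal ?_
  have key := pt_split hσ0 hσ1 ha hb hc
  rw [show a * c * (b * b) = a * c * b ^ 2 by ring, key, mul_assoc]
  gcongr

lemma gradNormSq3_nonneg (f : E3 → ℝ) (x : E3) : 0 ≤ gradNormSq3 f x :=
  Finset.sum_nonneg fun i _ => sq_nonneg _

lemma gradNormSq3_cont {f : E3 → ℝ} (hf : ContDiff ℝ 1 f) : Continuous (gradNormSq3 f) := by
  have hdf : Continuous (fderiv ℝ f) := hf.continuous_fderiv one_ne_zero
  unfold gradNormSq3
  exact continuous_finset_sum _ fun i _ =>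
    ((ContinuousLinearMap.apply ℝ ℝ (e3 i)).continuous.comp hdf).pow 2


end Helpers

/-- for `3/2 < q < ∞`, `M > 0` and any `η > 0` there is `C > 0`
(depending only on `q, M, η`) such that for all `0 ≤ ρ ≤ M` measurable, `θ ≥ 0`
compactly supported `C¹`, and `u` compactly supported `C¹`:
`∫ ρ|u|²θ² ≤ C ‖θ‖_q^{2q/(2q−3)} (‖√ρ θ‖₂² + ‖√ρ |u|²‖₂²) + η (‖∇θ‖₂² + ‖∇|u|²‖₂²)`. -/
theorem rho_u_sq_theta_sq_estimate (q M : ℝ) (hq : 3 / 2 < q) (hM : 0 < M) :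
    ∀ η > 0, ∃ C > 0, ∀ (ρ θ : E3 → ℝ) (u : E3 → E3),
      Measurable ρ → (∀ x, 0 ≤ ρ x) → (∀ x, ρ x ≤ M) →
      ContDiff ℝ 1 θ → HasCompactSupport θ → (∀ x, 0 ≤ θ x) →
      ContDiff ℝ 1 u → HasCompactSupport u →
      ∫ x : E3, ρ x * ‖u x‖ ^ 2 * θ x ^ 2
        ≤ C * Lq3 θ q ^ (2 * q / (2 * q - 3))
              * ((∫ x : E3, ρ x * θ x ^ 2) + ∫ x : E3, ρ x * ‖u x‖ ^ 4)
          + η * ((∫ x : E3, gradNormSq3 θ x)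
              + ∫ x : E3, gradNormSq3 (fun y => ‖u y‖ ^ 2) x) := by
  have hq0 : (0:ℝ) < q := by linarith
  have h2q3 : (0:ℝ) < 2 * q - 3 := by linarith
  set σ : ℝ := 3 / (2 * q) with hσdef
  have hσ0 : 0 < σ := by rw [hσdef]; positivity
  have hσ1 : σ < 1 := by rw [hσdef, div_lt_one (by linarith)]; linarith
  set p : ℝ := 2 * q / (2 * q - 3) with hpdef
  set p' : ℝ := 2 * q / 3 with hp'def
  have hp0 : 0 < p := by rw [hpdef]; positivity
  have hp'0 : 0 < p' := by rw [hp'def]; positivity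
  have hp1 : 1 < p := by rw [hpdef, lt_div_iff₀ h2q3]; linarith
  have hpq : Real.HolderConjugate p p' := by
    refine Real.holderConjugate_iff.mpr ⟨hp1, ?_⟩
    rw [hpdef, hp'def]
    field_simp <;> ring
  have hpq32 : Real.HolderConjugate (3/2) 3 := by constructor <;> norm_num
  have hτp : (1 - σ) * p = 1 := by rw [hσdef, hpdef]; field_simp <;> ring
  have hτinv : 1 / p = 1 - σ := by rw [hσdef, hpdef]; field_simp <;> ring <;> ring
  have hσp' : σ * p' = 1 := by rw [hσdef, hp'def]; field_simp <;> ring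
  have hp'inv : 1 / p' = σ := by rw [hσdef, hp'def, one_div_div]
  have hp'q : p' * (3 / 2) = q := by rw [hp'def]; field_simp <;> ring
  intro η hη
  set K : ℝ := M ^ σ * (2 * ((cS : ℝ)) ^ 6) ^ (1 / (2 * q)) with hKdef
  have hK0 : 0 ≤ K := by rw [hKdef]; positivity
  set lam : ℝ := (η * p') ^ (1 / p') with hlamdef
  have hlam0 : 0 < lam := Real.rpow_pos_of_pos (by positivity) _
  refine ⟨(K / lam) ^ p / p + 1, by positivity, ?_⟩
  intro ρ θ u hρm hρ0 hρM hθC hθsupp hθ0 huC huSupp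
  set u₂ : E3 → ℝ := fun y => ‖u y‖ ^ 2 with hu₂def
  have hu₂C : ContDiff ℝ 1 u₂ := huC.norm_sq (𝕜 := ℝ)
  have hu₂supp : HasCompactSupport u₂ := huSupp.comp_left (g := fun v : E3 => ‖v‖ ^ 2) (by simp)
  have hu₂0 : ∀ x, 0 ≤ u₂ x := fun x => by positivity
  set Φ : E3 → ℝ≥0∞ := fun x => ENNReal.ofReal (ρ x) with hΦdef
  set Θ : E3 → ℝ≥0∞ := fun x => ENNReal.ofReal (θ x) with hΘdef
  set U : E3 → ℝ≥0∞ := fun x => ENNReal.ofReal (u₂ x) with hUdef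
  have hΦm : Measurable Φ := hρm.ennreal_ofReal
  have hΘm : Measurable Θ := hθC.continuous.measurable.ennreal_ofReal
  have hUm : Measurable U := hu₂C.continuous.measurable.ennreal_ofReal
  set W : E3 → ℝ≥0∞ := fun x => ENNReal.ofReal (ρ x * θ x * u₂ x) with hWdef
  have hWm : Measurable W :=
    ((hρm.mul hθC.continuous.measurable).mul hu₂C.continuous.measurable).ennreal_ofReal
  set G : E3 → ℝ≥0∞ := fun x => Θ x * (Θ x * U x) ^ σ with hGdef
  have hGm : Measurable G := hΘm.mul ((hΘm.mul hUm).pow_const σ)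
  set T : ℝ≥0∞ := ∫⁻ x, Φ x * U x * (Θ x * Θ x) with hTdef
  set IA : ℝ≥0∞ := ∫⁻ x, Φ x * (Θ x * Θ x) with hIAdef
  set IB : ℝ≥0∞ := ∫⁻ x, Φ x * (U x * U x) with hIBdef
  set Nq : ℝ≥0∞ := ∫⁻ x, Θ x ^ q with hNqdef
  set Gθ : ℝ≥0∞ := ∫⁻ x, ENNReal.ofReal (gradNormSq3 θ x) with hGθdef
  set Gu : ℝ≥0∞ := ∫⁻ x, ENNReal.ofReal (gradNormSq3 u₂ x) with hGudef
  set D : ℝ≥0∞ := Gθ + Gu with hDdef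
  -- Step 1: pointwise splitting
  have step1 : T ≤ ENNReal.ofReal (M ^ σ) * ∫⁻ x, W x ^ (1 - σ) * G x := by
    rw [hTdef]
    refine le_trans (lintegral_mono fun x =>
      pt_main σ M hσ0 hσ1 (ρ x) (θ x) (u₂ x) (hρ0 x) (hρM x) (hθ0 x) (hu₂0 x)) ?_
    exact le_of_eq (lintegral_const_mul' _ _ ENNReal.ofReal_ne_top)
  -- Step 2: Hölder with exponents (p, p')
  have step2 : ∫⁻ x, W x ^ (1 - σ) * G x
      ≤ (∫⁻ x, W x) ^ (1 - σ) * (∫⁻ x, G x ^ p') ^ (1 / p') := by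
    have h := ENNReal.lintegral_mul_le_Lp_mul_Lq volume hpq
      (hWm.pow_const (1 - σ)).aemeasurable hGm.aemeasurable
    simp only [Pi.mul_apply] at h
    refine le_trans h (le_of_eq ?_)
    have h1 : ∀ x : E3, (W x ^ (1 - σ)) ^ p = W x := fun x => by
      rw [← ENNReal.rpow_mul, hτp, ENNReal.rpow_one]
    simp_rw [h1, hτinv]
  -- Step 3: Hölder with exponents (3/2, 3)
  have step3 : ∫⁻ x, G x ^ p'
      ≤ Nq ^ (2/3 : ℝ) * (∫⁻ x, (Θ x * U x) ^ (3:ℝ)) ^ (1/3 : ℝ) := by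
    have h := ENNReal.lintegral_mul_le_Lp_mul_Lq volume hpq32
      (hΘm.pow_const p').aemeasurable (hΘm.mul hUm).aemeasurable
    simp only [Pi.mul_apply] at h
    have hGp : ∀ x : E3, G x ^ p' = Θ x ^ p' * (Θ x * U x) := by
      intro x
      rw [hGdef, ENNReal.mul_rpow_of_nonneg _ _ hp'0.le, ← ENNReal.rpow_mul, hσp',
        ENNReal.rpow_one]
    calc ∫⁻ x, G x ^ p' = ∫⁻ x, Θ x ^ p' * (Θ x * U x) := lintegral_congr hGp
      _ ≤ (∫⁻ x, (Θ x ^ p') ^ (3/2:ℝ)) ^ (1/(3/2:ℝ))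
            * (∫⁻ x, (Θ x * U x) ^ (3:ℝ)) ^ (1/(3:ℝ)) := h
      _ = Nq ^ (2/3 : ℝ) * (∫⁻ x, (Θ x * U x) ^ (3:ℝ)) ^ (1/3 : ℝ) := by
          congr 2
          · refine lintegral_congr fun x => ?_
            rw [← ENNReal.rpow_mul, hp'q]
          · norm_num
  -- Step 4: ∫ W ≤ IA + IB
  have step4 : ∫⁻ x, W x ≤ IA + IB := by
    rw [hIAdef, hIBdef, ← lintegral_add_left (f := fun x => Φ x * (Θ x * Θ x)) (hΦm.mul (hΘm.mul hΘm))]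
    refine lintegral_mono fun x => ?_
    have hW : W x = Φ x * (Θ x * U x) := by
      show ENNReal.ofReal (ρ x * θ x * u₂ x) = Φ x * (Θ x * U x)
      rw [ENNReal.ofReal_mul (mul_nonneg (hρ0 x) (hθ0 x)),
        ENNReal.ofReal_mul (hρ0 x), mul_assoc]
    rw [hW]
    calc Φ x * (Θ x * U x) ≤ Φ x * (Θ x * Θ x + U x * U x) :=
          mul_le_mul_right (mul_le_add_sq _ _) _
      _ = Φ x * (Θ x * Θ x) + Φ x * (U x * U x) := by rw [mul_add]
  -- Step 5: Sobolev bound on the cube term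
  have hsobθ : ∫⁻ x, Θ x ^ (6:ℝ) ≤ (cS:ℝ≥0∞) ^ (6:ℝ) * Gθ ^ (3:ℝ) := by
    have : ∀ x : E3, Θ x = (‖θ x‖₊ : ℝ≥0∞) := fun x =>
      (Real.enorm_eq_ofReal (hθ0 x)).symm
    simp_rw [this]
    exact sobolev6 θ hθC hθsupp
  have hsobu : ∫⁻ x, U x ^ (6:ℝ) ≤ (cS:ℝ≥0∞) ^ (6:ℝ) * Gu ^ (3:ℝ) := by
    have : ∀ x : E3, U x = (‖u₂ x‖₊ : ℝ≥0∞) := fun x =>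
      (Real.enorm_eq_ofReal (hu₂0 x)).symm
    simp_rw [this]
    exact sobolev6 u₂ hu₂C hu₂supp
  have step5 : ∫⁻ x, (Θ x * U x) ^ (3:ℝ) ≤ 2 * (cS:ℝ≥0∞) ^ (6:ℝ) * D ^ (3:ℝ) := by
    calc ∫⁻ x, (Θ x * U x) ^ (3:ℝ) ≤ ∫⁻ x, (Θ x ^ (6:ℝ) + U x ^ (6:ℝ)) :=
          lintegral_mono fun x => cube_mul_le _ _
      _ = (∫⁻ x, Θ x ^ (6:ℝ)) + ∫⁻ x, U x ^ (6:ℝ) :=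
          lintegral_add_left (hΘm.pow_const _) _
      _ ≤ (cS:ℝ≥0∞) ^ (6:ℝ) * Gθ ^ (3:ℝ) + (cS:ℝ≥0∞) ^ (6:ℝ) * Gu ^ (3:ℝ) :=
          add_le_add hsobθ hsobu
      _ ≤ (cS:ℝ≥0∞) ^ (6:ℝ) * D ^ (3:ℝ) + (cS:ℝ≥0∞) ^ (6:ℝ) * D ^ (3:ℝ) := by
          gcongr
          · exact le_self_add
          · exact le_add_self
      _ = 2 * (cS:ℝ≥0∞) ^ (6:ℝ) * D ^ (3:ℝ) := by ring
  have hI3 : (∫⁻ x, (Θ x * U x) ^ (3:ℝ)) ^ (σ/3 : ℝ)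
      ≤ ENNReal.ofReal ((2 * ((cS:ℝ)) ^ 6) ^ (1/(2*q))) * D ^ σ := by
    have h2c : (2:ℝ≥0∞) * (cS:ℝ≥0∞) ^ (6:ℝ) = ENNReal.ofReal (2 * ((cS:ℝ)) ^ 6) := by
      rw [ENNReal.ofReal_mul (by norm_num)]
      congr 1
      · norm_num
      · rw [← ENNReal.ofReal_coe_nnreal, ENNReal.ofReal_pow cS.coe_nonneg,
          ← ENNReal.rpow_natCast (ENNReal.ofReal (cS:ℝ)) 6]
        norm_num
    calc (∫⁻ x, (Θ x * U x) ^ (3:ℝ)) ^ (σ/3:ℝ)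
        ≤ (2 * (cS:ℝ≥0∞) ^ (6:ℝ) * D ^ (3:ℝ)) ^ (σ/3:ℝ) :=
          ENNReal.rpow_le_rpow step5 (by positivity)
      _ = (2 * (cS:ℝ≥0∞) ^ (6:ℝ)) ^ (σ/3:ℝ) * D ^ σ := by
          rw [ENNReal.mul_rpow_of_nonneg _ _ (by positivity), ← ENNReal.rpow_mul,
            show (3:ℝ) * (σ/3) = σ by ring]
      _ = ENNReal.ofReal ((2 * ((cS:ℝ)) ^ 6) ^ (1/(2*q))) * D ^ σ := by
          rw [h2c, ENNReal.ofReal_rpow_of_nonneg (by positivity) (by positivity),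
            show (σ/3 : ℝ) = 1/(2*q) by rw [hσdef]; ring]
  -- Combine steps 1-5
  have main1 : T ≤ ENNReal.ofReal K * ((IA + IB) ^ (1-σ) * (Nq ^ (1/q:ℝ) * D ^ σ)) := by
    have hKsplit : ENNReal.ofReal K
        = ENNReal.ofReal (M ^ σ) * ENNReal.ofReal ((2 * ((cS:ℝ)) ^ 6) ^ (1/(2*q))) := by
      rw [hKdef, ENNReal.ofReal_mul (by positivity)]
    calc T ≤ ENNReal.ofReal (M ^ σ) * ∫⁻ x, W x ^ (1 - σ) * G x := step1
      _ ≤ ENNReal.ofReal (M ^ σ)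
            * ((∫⁻ x, W x) ^ (1-σ) * (∫⁻ x, G x ^ p') ^ (1/p')) :=
          mul_le_mul_right step2 _
      _ ≤ ENNReal.ofReal (M ^ σ)
            * ((IA + IB) ^ (1-σ)
              * ((Nq ^ (2/3 : ℝ) * (∫⁻ x, (Θ x * U x) ^ (3:ℝ)) ^ (1/3 : ℝ)) ^ (1/p'))) := by
          exact mul_le_mul_right (mul_le_mul'
            (ENNReal.rpow_le_rpow step4 (by linarith))
            (ENNReal.rpow_le_rpow step3 (by rw [hp'inv]; exact hσ0.le))) _
      _ = ENNReal.ofReal (M ^ σ)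
            * ((IA + IB) ^ (1-σ)
              * (Nq ^ (1/q:ℝ) * (∫⁻ x, (Θ x * U x) ^ (3:ℝ)) ^ (σ/3 : ℝ))) := by
          rw [hp'inv, ENNReal.mul_rpow_of_nonneg _ _ hσ0.le, ← ENNReal.rpow_mul,
            ← ENNReal.rpow_mul, show (2/3 : ℝ) * σ = 1/q by rw [hσdef]; ring,
            show (1/3 : ℝ) * σ = σ/3 by ring]
      _ ≤ ENNReal.ofReal (M ^ σ)
            * ((IA + IB) ^ (1-σ)
              * (Nq ^ (1/q:ℝ) * (ENNReal.ofReal ((2 * ((cS:ℝ)) ^ 6) ^ (1/(2*q))) * D ^ σ))) := by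
          exact mul_le_mul_right (mul_le_mul_right (mul_le_mul_right hI3 _) _) _
      _ = ENNReal.ofReal K * ((IA + IB) ^ (1-σ) * (Nq ^ (1/q:ℝ) * D ^ σ)) := by
          rw [hKsplit]; ring
  -- Young's inequality
  set Λ : ℝ≥0∞ := ENNReal.ofReal lam with hΛdef
  have hΛ0 : Λ ≠ 0 := by rw [hΛdef]; exact (ENNReal.ofReal_pos.mpr hlam0).ne'
  have hΛt : Λ ≠ ⊤ := ENNReal.ofReal_ne_top
  have main2 : T ≤ ENNReal.ofReal ((K/lam) ^ p / p) * ((Nq ^ (1/q:ℝ)) ^ p * (IA + IB))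
      + ENNReal.ofReal η * D := by
    set X : ℝ≥0∞ := Nq ^ (1/q:ℝ) * (IA + IB) ^ (1-σ) with hXdef
    have hprod : (ENNReal.ofReal K / Λ * X) * (Λ * D ^ σ)
        = ENNReal.ofReal K * ((IA + IB) ^ (1-σ) * (Nq ^ (1/q:ℝ) * D ^ σ)) := by
      calc (ENNReal.ofReal K / Λ * X) * (Λ * D ^ σ)
          = (ENNReal.ofReal K / Λ * Λ) * (X * D ^ σ) := by
            simp only [div_eq_mul_inv]; ring
        _ = ENNReal.ofReal K * (X * D ^ σ) := by rw [ENNReal.div_mul_cancel hΛ0 hΛt]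
        _ = ENNReal.ofReal K * ((IA + IB) ^ (1-σ) * (Nq ^ (1/q:ℝ) * D ^ σ)) := by
            rw [hXdef]; ring
    have young := ENNReal.young_inequality (ENNReal.ofReal K / Λ * X) (Λ * D ^ σ) hpq
    have hterm1 : (ENNReal.ofReal K / Λ * X) ^ p / ENNReal.ofReal p
        = ENNReal.ofReal ((K/lam) ^ p / p) * ((Nq ^ (1/q:ℝ)) ^ p * (IA + IB)) := by
      have hXp : X ^ p = (Nq ^ (1/q:ℝ)) ^ p * (IA + IB) := by
        rw [hXdef, ENNReal.mul_rpow_of_nonneg _ _ hp0.le, ← ENNReal.rpow_mul (IA+IB),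
          hτp, ENNReal.rpow_one]
      have hKl : (ENNReal.ofReal K / Λ) ^ p = ENNReal.ofReal ((K/lam) ^ p) := by
        rw [hΛdef, ← ENNReal.ofReal_div_of_pos hlam0,
          ENNReal.ofReal_rpow_of_nonneg (by positivity) hp0.le]
      rw [ENNReal.mul_rpow_of_nonneg _ _ hp0.le, hXp, hKl]
      rw [ENNReal.ofReal_div_of_pos hp0]
      simp only [div_eq_mul_inv]; ring
    have hterm2 : (Λ * D ^ σ) ^ p' / ENNReal.ofReal p' = ENNReal.ofReal η * D := by
      rw [ENNReal.mul_rpow_of_nonneg _ _ hp'0.le, ← ENNReal.rpow_mul D, hσp',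
        ENNReal.rpow_one, hΛdef, ENNReal.ofReal_rpow_of_nonneg hlam0.le hp'0.le]
      have hlp : lam ^ p' = η * p' := by
        rw [hlamdef, ← Real.rpow_mul (by positivity), one_div,
          inv_mul_cancel₀ hp'0.ne', Real.rpow_one]
      have hdiv : ENNReal.ofReal (η * p') / ENNReal.ofReal p' = ENNReal.ofReal η := by
        rw [← ENNReal.ofReal_div_of_pos hp'0, mul_div_assoc, div_self hp'0.ne', mul_one]
      calc ENNReal.ofReal (lam ^ p') * D / ENNReal.ofReal p'
          = (ENNReal.ofReal (η * p') / ENNReal.ofReal p') * D := by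
            rw [hlp]; simp only [div_eq_mul_inv]; ring
        _ = ENNReal.ofReal η * D := by rw [hdiv]
    calc T ≤ (ENNReal.ofReal K / Λ * X) * (Λ * D ^ σ) := by rw [hprod]; exact main1
      _ ≤ (ENNReal.ofReal K / Λ * X) ^ p / ENNReal.ofReal p
            + (Λ * D ^ σ) ^ p' / ENNReal.ofReal p' := young
      _ = ENNReal.ofReal ((K/lam) ^ p / p) * ((Nq ^ (1/q:ℝ)) ^ p * (IA + IB))
            + ENNReal.ofReal η * D := by rw [hterm1, hterm2]
  -- Boundedness and finiteness facts
  obtain ⟨bθ, hbθ⟩ := hθsupp.exists_bound_of_continuous hθC.continuous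
  obtain ⟨bu, hbu⟩ := hu₂supp.exists_bound_of_continuous hu₂C.continuous
  have hθb : ∀ x, θ x ≤ bθ := fun x => le_trans (le_abs_self _)
    (by rw [← Real.norm_eq_abs]; exact hbθ x)
  have hub : ∀ x, u₂ x ≤ bu := fun x => le_trans (le_abs_self _)
    (by rw [← Real.norm_eq_abs]; exact hbu x)
  have hΘle : ∀ x, Θ x ≤ ENNReal.ofReal bθ := fun x => ENNReal.ofReal_le_ofReal (hθb x)
  have hUle : ∀ x, U x ≤ ENNReal.ofReal bu := fun x => ENNReal.ofReal_le_ofReal (hub x)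
  have hΘzero : ∀ x ∉ tsupport θ, Θ x = 0 := fun x hx => by
    rw [hΘdef]; simp [image_eq_zero_of_notMem_tsupport hx]
  have hUzero : ∀ x ∉ tsupport u₂, U x = 0 := fun x hx => by
    rw [hUdef]; simp [image_eq_zero_of_notMem_tsupport hx]
  have hNq_ne : Nq ≠ ⊤ := by
    refine lint_fin hθsupp (c := ENNReal.ofReal bθ ^ q)
      (ENNReal.rpow_ne_top_of_nonneg hq0.le ENNReal.ofReal_ne_top)
      (fun x => ENNReal.rpow_le_rpow (hΘle x) hq0.le) (fun x hx => ?_)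
    rw [hΘzero x hx, ENNReal.zero_rpow_of_pos hq0]
  have hIA_ne : IA ≠ ⊤ := by
    refine lint_fin hθsupp
      (c := ENNReal.ofReal M * (ENNReal.ofReal bθ * ENNReal.ofReal bθ))
      (by simp [ENNReal.mul_ne_top]) (fun x => ?_) (fun x hx => by rw [hΘzero x hx]; simp)
    exact mul_le_mul' (ENNReal.ofReal_le_ofReal (hρM x)) (mul_le_mul' (hΘle x) (hΘle x))
  have hIB_ne : IB ≠ ⊤ := by
    refine lint_fin hu₂supp
      (c := ENNReal.ofReal M * (ENNReal.ofReal bu * ENNReal.ofReal bu))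
      (by simp [ENNReal.mul_ne_top]) (fun x => ?_) (fun x hx => by rw [hUzero x hx]; simp)
    exact mul_le_mul' (ENNReal.ofReal_le_ofReal (hρM x)) (mul_le_mul' (hUle x) (hUle x))
  have hgrad_ne : ∀ f : E3 → ℝ, ContDiff ℝ 1 f → HasCompactSupport f →
      (∫⁻ x, ENNReal.ofReal (gradNormSq3 f x)) ≠ ⊤ := by
    intro f hfC hfsupp
    obtain ⟨bd, hbd⟩ := (hfsupp.fderiv (𝕜 := ℝ)).exists_bound_of_continuous
      (hfC.continuous_fderiv one_ne_zero)
    refine lint_fin (hfsupp.fderiv (𝕜 := ℝ)) (c := ENNReal.ofReal (bd ^ 2))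
      ENNReal.ofReal_ne_top (fun x => ?_) (fun x hx => ?_)
    · refine ENNReal.ofReal_le_ofReal ?_
      rw [show gradNormSq3 f x = ‖fderiv ℝ f x‖ ^ 2 from (opnorm_sq_eq _).symm]
      exact pow_le_pow_left₀ (norm_nonneg _) (hbd x) 2
    · rw [show gradNormSq3 f x = ‖fderiv ℝ f x‖ ^ 2 from (opnorm_sq_eq _).symm,
        image_eq_zero_of_notMem_tsupport hx]
      simp
  have hGθ_ne : Gθ ≠ ⊤ := hgrad_ne θ hθC hθsupp
  have hGu_ne : Gu ≠ ⊤ := hgrad_ne u₂ hu₂C hu₂supp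
  have hD_ne : D ≠ ⊤ := by rw [hDdef]; exact ENNReal.add_ne_top.mpr ⟨hGθ_ne, hGu_ne⟩
  -- Identifications of the Bochner integrals
  have hT_eq : ∫ x : E3, ρ x * ‖u x‖ ^ 2 * θ x ^ 2 = T.toReal := by
    rw [hTdef, MeasureTheory.integral_eq_lintegral_of_nonneg_ae
      (Filter.Eventually.of_forall fun x =>
        mul_nonneg (mul_nonneg (hρ0 x) (by positivity)) (by positivity))
      (((hρm.mul hu₂C.continuous.measurable).mul
        (hθC.continuous.measurable.pow_const 2)).aestronglyMeasurable)]
    congr 1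
    refine lintegral_congr fun x => ?_
    rw [ENNReal.ofReal_mul (mul_nonneg (hρ0 x) (hu₂0 x)), ENNReal.ofReal_mul (hρ0 x),
      pow_two (θ x), ENNReal.ofReal_mul (hθ0 x)]
  have hIA_eq : ∫ x : E3, ρ x * θ x ^ 2 = IA.toReal := by
    rw [hIAdef, MeasureTheory.integral_eq_lintegral_of_nonneg_ae
      (Filter.Eventually.of_forall fun x => mul_nonneg (hρ0 x) (by positivity))
      ((hρm.mul (hθC.continuous.measurable.pow_const 2)).aestronglyMeasurable)]
    congr 1
    refine lintegral_congr fun x => ?_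
    rw [ENNReal.ofReal_mul (hρ0 x), pow_two (θ x), ENNReal.ofReal_mul (hθ0 x)]
  have hIB_eq : ∫ x : E3, ρ x * ‖u x‖ ^ 4 = IB.toReal := by
    rw [hIBdef, MeasureTheory.integral_eq_lintegral_of_nonneg_ae
      (Filter.Eventually.of_forall fun x => mul_nonneg (hρ0 x) (by positivity))
      ((hρm.mul (huC.continuous.norm.measurable.pow_const 4)).aestronglyMeasurable)]
    congr 1
    refine lintegral_congr fun x => ?_
    rw [show ρ x * ‖u x‖ ^ 4 = ρ x * (u₂ x * u₂ x) by rw [hu₂def]; ring,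
      ENNReal.ofReal_mul (hρ0 x), ENNReal.ofReal_mul (hu₂0 x)]
  have hgrad_eq : ∀ f : E3 → ℝ, ContDiff ℝ 1 f →
      ∫ x : E3, gradNormSq3 f x = (∫⁻ x, ENNReal.ofReal (gradNormSq3 f x)).toReal := by
    intro f hfC
    rw [MeasureTheory.integral_eq_lintegral_of_nonneg_ae
      (Filter.Eventually.of_forall fun x => gradNormSq3_nonneg f x)
      (gradNormSq3_cont hfC).measurable.aestronglyMeasurable]
  have hNq_eq : Lq3 θ q = Nq.toReal ^ (1/q) := by
    have h1 : ∫ x : E3, |θ x| ^ q = Nq.toReal := by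
      rw [hNqdef, MeasureTheory.integral_eq_lintegral_of_nonneg_ae
        (Filter.Eventually.of_forall fun x => Real.rpow_nonneg (abs_nonneg _) q)
        ((hθC.continuous.abs.rpow_const fun x => Or.inr hq0.le).measurable.aestronglyMeasurable)]
      congr 1
      refine lintegral_congr fun x => ?_
      rw [abs_of_nonneg (hθ0 x), ← ENNReal.ofReal_rpow_of_nonneg (hθ0 x) hq0.le]
    rw [Lq3, h1, one_div]
  -- Final conversion to real numbers
  have hRHS_ne : ENNReal.ofReal ((K/lam) ^ p / p) * ((Nq ^ (1/q:ℝ)) ^ p * (IA + IB))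
      + ENNReal.ofReal η * D ≠ ⊤ := by
    refine ENNReal.add_ne_top.mpr ⟨ENNReal.mul_ne_top ENNReal.ofReal_ne_top
      (ENNReal.mul_ne_top (ENNReal.rpow_ne_top_of_nonneg hp0.le
        (ENNReal.rpow_ne_top_of_nonneg (by positivity) hNq_ne))
        (ENNReal.add_ne_top.mpr ⟨hIA_ne, hIB_ne⟩)),
      ENNReal.mul_ne_top ENNReal.ofReal_ne_top hD_ne⟩
  rw [hT_eq, hIA_eq, hIB_eq, hgrad_eq θ hθC, hgrad_eq u₂ hu₂C, hNq_eq]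
  calc T.toReal
      ≤ (ENNReal.ofReal ((K/lam) ^ p / p) * ((Nq ^ (1/q:ℝ)) ^ p * (IA + IB))
          + ENNReal.ofReal η * D).toReal := ENNReal.toReal_mono hRHS_ne main2
    _ = ((K/lam) ^ p / p) * ((Nq.toReal ^ (1/q)) ^ p * (IA.toReal + IB.toReal))
          + η * (Gθ.toReal + Gu.toReal) := by
        rw [ENNReal.toReal_add (ENNReal.mul_ne_top ENNReal.ofReal_ne_top
            (ENNReal.mul_ne_top (ENNReal.rpow_ne_top_of_nonneg hp0.le
              (ENNReal.rpow_ne_top_of_nonneg (by positivity) hNq_ne))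
              (ENNReal.add_ne_top.mpr ⟨hIA_ne, hIB_ne⟩)))
            (ENNReal.mul_ne_top ENNReal.ofReal_ne_top hD_ne),
          ENNReal.toReal_mul, ENNReal.toReal_mul, ENNReal.toReal_mul,
          ENNReal.toReal_add hIA_ne hIB_ne, hDdef, ENNReal.toReal_add hGθ_ne hGu_ne,
          ENNReal.toReal_ofReal (by positivity), ENNReal.toReal_ofReal hη.le,
          ← ENNReal.toReal_rpow, ← ENNReal.toReal_rpow]
    _ ≤ ((K/lam) ^ p / p + 1) * (Nq.toReal ^ (1/q)) ^ p * (IA.toReal + IB.toReal)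
          + η * (Gθ.toReal + Gu.toReal) := by
        rw [mul_assoc]
        gcongr
        · linarith
end
end
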